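/- Let (W,S) be a finite Coxeter system, I,J ⊆ S and s ∈ I∖J. If there exists t ∈ J∖I with ord(st) = 2, then X_{IJ}^s = 0 in Ω(W,S). Consequently X_{IJ}^s ≠ 0 implies that I ← J is an edge of the compatibility graph Q_W. -/

import Mathlib

open scoped TensorProduct

noncomputable section

namespace WGraphPaper

variable (k : Type*) [CommRing k] {B B₁ B₂ : Type*}

/-! ### Gyoja's W-graph algebra with coefficients in `k`
(`Omega ℤ M` is the W-graph algebra `Ω(W,S)` itself, `Omega k M` is `kΩ`). -/

/-- The free ring `k⟨e_b, x_b | b ∈ B⟩`; `Sum.inl b` encodes the generator `e_b` and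
`Sum.inr b` encodes the generator `x_b`. -/
abbrev FreeGen (B : Type*) := FreeAlgebra k (B ⊕ B)

def eGen (b : B) : FreeGen k B := FreeAlgebra.ι k (Sum.inl b)
def xGen (b : B) : FreeGen k B := FreeAlgebra.ι k (Sum.inr b)

/-- `altProd a b n` is the alternating product `a * b * a * ⋯` with `n` factors. -/
def altProd {A : Type*} [Monoid A] : A → A → ℕ → A
  | _, _, 0 => 1
  | a, b, n + 1 => a * altProd b a n

/-- The braid commutator `Δ_m(a,b) = (a b a ⋯) - (b a b ⋯)` (`m` factors each). -/
def braidComm {A : Type*} [Ring A] (m : ℕ) (a b : A) : A := altProd a b m - altProd b a m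

/-- `ι(T_b) = -v⁻¹ e_b + v (1 - e_b) + x_b`, an element of `(FreeGen k B)[v,v⁻¹]`. -/
def iotaT (b : B) : LaurentPolynomial (FreeGen k B) :=
  LaurentPolynomial.C (-(eGen k b)) * LaurentPolynomial.T (-1)
    + LaurentPolynomial.C (1 - eGen k b) * LaurentPolynomial.T 1
    + LaurentPolynomial.C (xGen k b)

/-- The coefficient of `v^n` in a Laurent polynomial. -/
def lcoeff {R : Type*} [Semiring R] (p : LaurentPolynomial R) (n : ℤ) : R :=
  p.coeff n

/-- The defining relations of Gyoja's W-graph algebra: the relations (a) and (b) together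
with the vanishing of all Laurent coefficients `y^γ(s,t)` of the braid commutators
`Δ_{m_{st}}(ι(T_s), ι(T_t))` (for `m_{st} < ∞`, i.e. `M s t ≠ 0`). -/
inductive OmegaRel (M : CoxeterMatrix B) : FreeGen k B → FreeGen k B → Prop
  | e_idem (b : B) : OmegaRel M (eGen k b * eGen k b) (eGen k b)
  | e_comm (b b' : B) : OmegaRel M (eGen k b * eGen k b') (eGen k b' * eGen k b)
  | ex (b : B) : OmegaRel M (eGen k b * xGen k b) (xGen k b)
  | xe (b : B) : OmegaRel M (xGen k b * eGen k b) 0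
  | braid (b b' : B) (h : M b b' ≠ 0) (γ : ℤ) :
      OmegaRel M (lcoeff (braidComm (M b b') (iotaT k b) (iotaT k b')) γ) 0

/-- Gyoja's W-graph algebra `Ω(W,S)` (for `k = ℤ`), resp. `kΩ(W,S)`, defined from
the Coxeter matrix of `(W,S)`. -/
abbrev Omega (M : CoxeterMatrix B) := RingQuot (OmegaRel k M)

/-- The image of the generator `e_b` in `Ω`. -/
def eOm (M : CoxeterMatrix B) (b : B) : Omega k M :=
  RingQuot.mkRingHom (OmegaRel k M) (eGen k b)

/-- The image of the generator `x_b` in `Ω`. -/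
def xOm (M : CoxeterMatrix B) (b : B) : Omega k M :=
  RingQuot.mkRingHom (OmegaRel k M) (xGen k b)

lemma commute_eOm (M : CoxeterMatrix B) (b b' : B) : Commute (eOm k M b) (eOm k M b') := by
  show _ = _
  rw [eOm, eOm, ← map_mul, ← map_mul]
  exact RingQuot.mkRingHom_rel (OmegaRel.e_comm b b')

lemma commute_oneSubEOm (M : CoxeterMatrix B) (b b' : B) :
    Commute (1 - eOm k M b) (1 - eOm k M b') :=
  (Commute.one_left _).sub_left ((Commute.one_right _).sub_right (commute_eOm k M b b'))

variable [Fintype B] [DecidableEq B] [DecidableEq B₁] [DecidableEq B₂]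

/-- The idempotent `E_I = (∏_{t ∈ I} e_t) (∏_{t ∈ S∖I} (1 - e_t))`. -/
def EOm (M : CoxeterMatrix B) (I : Finset B) : Omega k M :=
  (I.noncommProd (fun b => eOm k M b) (fun _ _ _ _ _ => commute_eOm k M _ _)) *
    ((Iᶜ).noncommProd (fun b => 1 - eOm k M b) (fun _ _ _ _ _ => commute_oneSubEOm k M _ _))

/-- The edge element `X_{IJ}^s = E_I x_s E_J`. -/
def XOm (M : CoxeterMatrix B) (I J : Finset B) (s : B) : Omega k M :=
  EOm k M I * xOm k M s * EOm k M J

/-- `I ← J` is an edge of the compatibility graph `Q_W`: `I ∖ J ≠ ∅` and no element of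
`I ∖ J` commutes (in `W`, i.e. `m_{st} = 2`) with an element of `J ∖ I`. -/
def QEdge (M : CoxeterMatrix B) (I J : Finset B) : Prop :=
  (I \ J).Nonempty ∧ ∀ s ∈ I \ J, ∀ t ∈ J \ I, M s t ≠ 2

/-- `I ⇆ J`: `I` and `J` are joined by a pair of transversal edges of `Q_W`. -/
def Transversal (M : CoxeterMatrix B) (I J : Finset B) : Prop :=
  QEdge M I J ∧ (J \ I).Nonempty

/-- The generators of the subalgebra `Ψ(W,S)`: all `E_I` and all transversal edge
elements `X_{IJ}`. -/
def psiGens (M : CoxeterMatrix B) : Set (Omega k M) :=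
  {a | ∃ I : Finset B, a = EOm k M I} ∪
    {a | ∃ I J : Finset B, ∃ s : B, Transversal M I J ∧ s ∈ I \ J ∧ a = XOm k M I J s}

/-- The subring `Ψ(W,S) ⊆ Ω(W,S)` generated by all `E_I` and all transversal edges. -/
def Psi (M : CoxeterMatrix B) : Subring (Omega k M) := Subring.closure (psiGens k M)

/-- The subalgebra `kΨ(W,S) ⊆ kΩ(W,S)` generated by all `E_I` and all transversal edges. -/
def PsiAlg (M : CoxeterMatrix B) : Subalgebra k (Omega k M) :=
  Algebra.adjoin k (psiGens k M)

/-! ### Products of Coxeter systems -/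

/-- The Coxeter matrix of the product `W₁ × W₂`, on `S = S₁ ⊔ S₂` (each element of `S₁`
commutes with each element of `S₂`). -/
def prodMatrix (M₁ : CoxeterMatrix B₁) (M₂ : CoxeterMatrix B₂) : CoxeterMatrix (B₁ ⊕ B₂) where
  M i j :=
    match i, j with
    | Sum.inl a, Sum.inl b => M₁ a b
    | Sum.inr a, Sum.inr b => M₂ a b
    | _, _ => 2
  isSymm := by
    unfold Matrix.IsSymm
    ext i j
    rcases i with a | a <;> rcases j with b | b <;>
      simp only [Matrix.transpose_apply] <;>
      first
        | exact M₁.symmetric b a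
        | exact M₂.symmetric b a
        | rfl
  diagonal i := by rcases i with a | a <;> simp [CoxeterMatrix.diagonal]
  off_diagonal i j h := by
    rcases i with a | a <;> rcases j with b | b
    · exact M₁.off_diagonal a b (by rintro rfl; exact h rfl)
    · simp
    · simp
    · exact M₂.off_diagonal a b (by rintro rfl; exact h rfl)

def inlEmb : B₁ ↪ B₁ ⊕ B₂ := ⟨Sum.inl, Sum.inl_injective⟩
def inrEmb : B₂ ↪ B₁ ⊕ B₂ := ⟨Sum.inr, Sum.inr_injective⟩

/-- The subset `I ⊔ K` of `S = S₁ ⊔ S₂`, for `I ⊆ S₁` and `K ⊆ S₂`. -/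
def fjoin (I : Finset B₁) (K : Finset B₂) : Finset (B₁ ⊕ B₂) :=
  I.map inlEmb ∪ K.map inrEmb

/-- The part `I₁ = I ∩ S₁` of a subset `I ⊆ S = S₁ ⊔ S₂`. -/
def part1 (I : Finset (B₁ ⊕ B₂)) : Finset B₁ :=
  I.preimage Sum.inl Sum.inl_injective.injOn

/-- The part `I₂ = I ∩ S₂` of a subset `I ⊆ S = S₁ ⊔ S₂`. -/
def part2 (I : Finset (B₁ ⊕ B₂)) : Finset B₂ :=
  I.preimage Sum.inr Sum.inr_injective.injOn

variable (M₁ : CoxeterMatrix B₁) (M₂ : CoxeterMatrix B₂)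

/-- `f` is the parabolic morphism `ι₁ : Ω₁ → Ω` (it sends `e_s ↦ e_s`, `x_s ↦ x_s`
for `s ∈ S₁`). -/
def Parab1Cond (f : Omega k M₁ → Omega k (prodMatrix M₁ M₂)) : Prop :=
  ∀ b : B₁, f (eOm k M₁ b) = eOm k (prodMatrix M₁ M₂) (Sum.inl b) ∧
    f (xOm k M₁ b) = xOm k (prodMatrix M₁ M₂) (Sum.inl b)

/-- `f` is the parabolic morphism `ι₂ : Ω₂ → Ω` (it sends `e_s ↦ e_s`, `x_s ↦ x_s`
for `s ∈ S₂`). -/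
def Parab2Cond (f : Omega k M₂ → Omega k (prodMatrix M₁ M₂)) : Prop :=
  ∀ b : B₂, f (eOm k M₂ b) = eOm k (prodMatrix M₁ M₂) (Sum.inr b) ∧
    f (xOm k M₂ b) = xOm k (prodMatrix M₁ M₂) (Sum.inr b)

/-- `t` is the morphism `τ : Ω → Ω₁ ⊗ Ω₂` of the paper: it sends `e_s ↦ e_s ⊗ 1`,
`x_s ↦ x_s ⊗ 1` for `s ∈ S₁` and `e_s ↦ 1 ⊗ e_s`, `x_s ↦ 1 ⊗ x_s` for `s ∈ S₂`. -/
def TauCond (t : Omega k (prodMatrix M₁ M₂) → Omega k M₁ ⊗[k] Omega k M₂) : Prop :=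
  (∀ b : B₁, t (eOm k (prodMatrix M₁ M₂) (Sum.inl b)) = eOm k M₁ b ⊗ₜ[k] 1 ∧
      t (xOm k (prodMatrix M₁ M₂) (Sum.inl b)) = xOm k M₁ b ⊗ₜ[k] 1) ∧
  (∀ b : B₂, t (eOm k (prodMatrix M₁ M₂) (Sum.inr b)) = 1 ⊗ₜ[k] eOm k M₂ b ∧
      t (xOm k (prodMatrix M₁ M₂) (Sum.inr b)) = 1 ⊗ₜ[k] xOm k M₂ b)



/-- The coefficientwise extension of a ring homomorphism to Laurent polynomial rings. -/
def laurentMap {R A : Type*} [Semiring R] [Semiring A] (f : R →+* A) :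
    LaurentPolynomial R →+* LaurentPolynomial A :=
  AddMonoidAlgebra.liftNCRingHom (LaurentPolynomial.C.comp f)
    { toFun := fun n => LaurentPolynomial.T (Multiplicative.toAdd n)
      map_one' := LaurentPolynomial.T_zero
      map_mul' := fun _ _ => LaurentPolynomial.T_add _ _ }
    (fun _ n => (LaurentPolynomial.commute_T (Multiplicative.toAdd n) _).symm)

/-- `k` is a good ring for `(W,S)`: it contains `2cos(2π/m_{st})` for all `s,t ∈ S`. -/
def GoodRing (M : CoxeterMatrix B) (k : Subring ℂ) : Prop :=
  ∀ i j : B, M i j ≠ 0 → (2 * Complex.cos (2 * Real.pi / (M i j : ℂ))) ∈ k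

/-- The irreducible complex characters of a finite group `G`. -/
def IrrChar (G : Type) [Group G] : Type :=
  {χ : G → ℂ // ∃ V : FDRep ℂ G, CategoryTheory.Simple V ∧ χ = FDRep.character V}

/-- The degree `d_λ` of an irreducible character `λ` (its value at `1`). -/
def IrrChar.degree {G : Type} [Group G] (χ : IrrChar G) : ℕ := ⌊(χ.val 1).re⌋₊

variable {ι : Type*}

/-- (Z1): the `F^λ` are a decomposition of the identity into orthogonal idempotents. -/
def Z1 {A : Type*} [Ring A] (F : ι → A) : Prop :=
  (∀ l, F l * F l = F l) ∧ (∀ l m, l ≠ m → F l * F m = 0) ∧ ∑ᶠ l, F l = 1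

variable [Fintype B] [DecidableEq B]

/-- (Z2): the decomposition is compatible with the one coming from the path-algebra
structure: `E_I F^λ = F^λ E_I`. -/
def Z2 (M : CoxeterMatrix B) (F : ι → Omega k M) : Prop :=
  ∀ l (I : Finset B), EOm k M I * F l = F l * EOm k M I

/-- (Z3), with a specified partial order `le`: only "downward edges" exist,
i.e. `F^λ Ω F^μ ≠ 0 → λ ⪯ μ`. -/
def Z3At {A : Type*} [Ring A] (F : ι → A) (le : ι → ι → Prop) : Prop :=
  ∀ l m, (∃ a : A, F l * a * F m ≠ 0) → le l m

/-- (Z3): there is a partial order on `Irr(W)` such that only "downward edges" exist. -/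
def Z3 {A : Type*} [Ring A] (F : ι → A) : Prop :=
  ∃ le : ι → ι → Prop, IsPartialOrder ι le ∧ Z3At F le

/-- (Z4): there are surjective `k`-algebra morphisms `k^{d_λ×d_λ} ↠ F^λ kΩ F^λ`. -/
def Z4 (M : CoxeterMatrix B) (F : ι → Omega k M) (d : ι → ℕ) : Prop :=
  ∀ l, ∃ ψ : Matrix (Fin (d l)) (Fin (d l)) k →ₗ[k] Omega k M,
    (∀ x y, ψ (x * y) = ψ x * ψ y) ∧ ψ 1 = F l ∧
      Set.range ψ = {z | ∃ a : Omega k M, z = F l * a * F l}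

/-- (Z5): `F^λ X_{IJ} F^λ ∈ kΨ(W,S)` for all edges `I ← J` of `Q_W`. -/
def Z5 (M : CoxeterMatrix B) (F : ι → Omega k M) : Prop :=
  ∀ l (I J : Finset B) (s : B), QEdge M I J → s ∈ I \ J →
    F l * XOm k M I J s * F l ∈ PsiAlg k M

/-- (Z6): `F^λ ∈ kΨ(W,S)`. -/
def Z6 (M : CoxeterMatrix B) (F : ι → Omega k M) : Prop :=
  ∀ l, F l ∈ PsiAlg k M

/-- The family satisfies all of (Z1)–(Z6), i.e. the strong W-graph decomposition
conjecture holds via this family (`d` is the degree function on `Irr(W)`). -/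
def StrongZ (M : CoxeterMatrix B) (F : ι → Omega k M) (d : ι → ℕ) : Prop :=
  Z1 F ∧ Z2 k M F ∧ Z3 F ∧ Z4 k M F d ∧ Z5 k M F ∧ Z6 k M F

/-- The maximal length (number of steps) of a strict chain for the relation `le`. -/
def orderHeight (le : ι → ι → Prop) : ℕ :=
  sSup {n | ∃ c : Fin (n + 1) → ι, Function.Injective c ∧
    ∀ i j : Fin (n + 1), i < j → le (c i) (c j)}


/-!
The coefficient of `v` in the braid relation of a pair `s, t` with `m_{st} = 2` reads
`(1 - e_s) x_t + x_s (1 - e_t) = (1 - e_t) x_s + x_t (1 - e_s)`; multiplied by `e_t` on the right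
it gives `(1 - e_t) x_s e_t = 0`, and `X_{IJ}^s = E_I (1 - e_t) x_s e_t E_J` when `t ∈ J ∖ I`.
For the consequence, the coefficient of `v^{m-1}` in the braid relation of a pair `s, u ∈ I ∖ J`
with `m = m_{su} < ∞`, sandwiched between `E_I` and `E_J`, leaves only `X_{IJ}^s = X_{IJ}^u`.
That all `m_{su}` are finite when `W` is finite is seen in the geometric representation, where
`s u` acts with infinite order if `m_{su} = ∞`.
-/

theorem _root_.Finset.mul_noncommProd_of_isIdempotentElem {α β : Type*} [Monoid β]
    [DecidableEq α] {s : Finset α} {f : α → β}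
    (comm : (s : Set α).Pairwise fun a b => Commute (f a) (f b))
    {a : α} (ha : a ∈ s) (hf : IsIdempotentElem (f a)) :
    f a * s.noncommProd f comm = s.noncommProd f comm := by
  rw [← s.mul_noncommProd_erase ha f comm, ← mul_assoc, hf.eq]

theorem _root_.Finset.mul_noncommProd_eq_zero_of_mem {α β : Type*} [MonoidWithZero β]
    [DecidableEq α] {s : Finset α} {f : α → β}
    (comm : (s : Set α).Pairwise fun a b => Commute (f a) (f b))
    {a : α} (ha : a ∈ s) {g : β} (hg : g * f a = 0) :
    g * s.noncommProd f comm = 0 := by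
  rw [← s.mul_noncommProd_erase ha f comm, ← mul_assoc, hg, zero_mul]

section GeometricRepresentation

open Real Finsupp

variable {B : Type*} (M : CoxeterMatrix B)

-- `m_{ab} = ∞` is encoded as `M a b = 0`, and `π / 0 = 0` then gives the standard value `-1`.
def cosCoeff (a b : B) : ℝ := -cos (π / M a b)

lemma cosCoeff_self (a : B) : cosCoeff M a a = 1 := by
  simp [cosCoeff]

lemma cosCoeff_comm (a b : B) : cosCoeff M a b = cosCoeff M b a := by
  rw [cosCoeff, cosCoeff, M.symmetric]

lemma cosCoeff_of_eq_zero {a b : B} (h : M a b = 0) : cosCoeff M a b = -1 := by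
  simp [cosCoeff, h]

def cosForm (a : B) : (B →₀ ℝ) →ₗ[ℝ] ℝ := linearCombination ℝ (cosCoeff M a)

@[simp]
lemma cosForm_single (a b : B) (r : ℝ) : cosForm M a (single b r) = r * cosCoeff M a b := by
  simp [cosForm]

def geomReflection (a : B) : Module.End ℝ (B →₀ ℝ) :=
  LinearMap.id - (2 • cosForm M a).smulRight (single a 1)

lemma geomReflection_apply (a : B) (v : B →₀ ℝ) :
    geomReflection M a v = v - single a (2 * cosForm M a v) := by
  simp [geomReflection]

lemma geomReflection_apply_of_cosForm_eq_zero {a : B} {v : B →₀ ℝ} (h : cosForm M a v = 0) :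
    geomReflection M a v = v := by
  rw [geomReflection_apply, h, mul_zero, single_zero, sub_zero]

lemma cosForm_geomReflection (a : B) (v : B →₀ ℝ) :
    cosForm M a (geomReflection M a v) = -cosForm M a v := by
  rw [geomReflection_apply, map_sub, cosForm_single, cosCoeff_self]
  ring

lemma geomReflection_mul_self (a : B) : geomReflection M a * geomReflection M a = 1 := by
  refine LinearMap.ext fun v => ?_
  rw [Module.End.mul_apply, geomReflection_apply (v := geomReflection M a v),
    cosForm_geomReflection, geomReflection_apply, Module.End.one_apply, sub_sub,
    ← single_add]
  simp

lemma geomReflection_apply_plane {a b : B} {c : ℝ} (hc : cosCoeff M a b = -c) (x y : ℝ) :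
    geomReflection M a (single a x + single b y) = single a (2 * c * y - x) + single b y := by
  rw [geomReflection_apply, map_add, cosForm_single, cosForm_single, cosCoeff_self, hc,
    show 2 * c * y - x = x - 2 * (x * 1 + y * -c) by ring, single_sub]
  abel

lemma geomReflection_mul_pow_apply {a b : B} {c : ℝ} (hc : cosCoeff M a b = -c) {u : ℕ → ℝ}
    (hu : ∀ n, u (n + 2) = 2 * c * u (n + 1) - u n) (j : ℕ) :
    ((geomReflection M a * geomReflection M b) ^ j) (single a (u 1) + single b (u 0)) =
      single a (u (2 * j + 1)) + single b (u (2 * j)) := by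
  have hc' : cosCoeff M b a = -c := cosCoeff_comm M a b ▸ hc
  induction j with
  | zero => simp
  | succ j ih =>
    rw [pow_succ', Module.End.mul_apply, ih, Module.End.mul_apply, add_comm,
      geomReflection_apply_plane M hc', add_comm, geomReflection_apply_plane M hc,
      ← hu, ← hu]
    ring_nf

lemma exists_cosForm_sub_eq_zero {a b : B} (hk : cosCoeff M a b ^ 2 ≠ 1) (v : B →₀ ℝ) :
    ∃ x y : ℝ, cosForm M a (v - single a x - single b y) = 0 ∧
      cosForm M b (v - single a x - single b y) = 0 := by
  have hk' : 1 - cosCoeff M a b ^ 2 ≠ 0 := sub_ne_zero.mpr (Ne.symm hk)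
  refine ⟨(cosForm M a v - cosCoeff M a b * cosForm M b v) / (1 - cosCoeff M a b ^ 2),
    (cosForm M b v - cosCoeff M a b * cosForm M a v) / (1 - cosCoeff M a b ^ 2), ?_, ?_⟩ <;>
  · simp only [map_sub, cosForm_single, cosCoeff_self, ← cosCoeff_comm M a b]
    field_simp
    ring

lemma sin_pi_div_ne_zero {m : ℕ} (hm : 2 ≤ m) : sin (π / m) ≠ 0 :=
  (sin_pos_of_pos_of_lt_pi (by positivity) (div_lt_self pi_pos (by norm_cast))).ne'

lemma geomReflection_mul_pow_apply_plane {a b : B} (hm : 2 ≤ M a b) (x y : ℝ) :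
    ((geomReflection M a * geomReflection M b) ^ M a b) (single a x + single b y) =
      single a x + single b y := by
  set m := M a b
  set θ := π / m
  have hmθ : (m : ℝ) * θ = π := mul_div_cancel₀ π (by norm_cast; omega)
  have hsin : sin θ ≠ 0 := sin_pi_div_ne_zero hm
  -- the solution of the recurrence below with `u 1 = x` and `u 0 = y`; it has period `2 m`
  set u : ℕ → ℝ := fun n => (x * sin (n * θ) - y * sin ((n - 1) * θ)) / sin θ with hu_def
  have hu : ∀ n, u (n + 2) = 2 * cos θ * u (n + 1) - u n := by
    intro n
    have h₁ := two_mul_sin_mul_cos ((n + 1) * θ) θ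
    have h₂ := two_mul_sin_mul_cos (n * θ) θ
    simp only [hu_def]
    push_cast
    field_simp
    ring_nf at h₁ h₂ ⊢
    linear_combination y * h₂ - x * h₁
  have hper : ∀ n, u (n + 2 * m) = u n := by
    intro n
    simp only [hu_def]
    push_cast
    rw [show ((n : ℝ) + 2 * m) * θ = n * θ + 2 * π by linear_combination 2 * hmθ,
      show ((n : ℝ) + 2 * m - 1) * θ = (n - 1) * θ + 2 * π by linear_combination 2 * hmθ,
      sin_add_two_pi, sin_add_two_pi]
  have h1 : u 1 = x := by simp [hu_def, hsin]
  have h0 : u 0 = y := by simp [hu_def, hsin]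
  have := geomReflection_mul_pow_apply M (c := cos θ) rfl hu m
  rwa [add_comm _ 1, hper, ← zero_add (2 * m), hper, h1, h0] at this

lemma geomReflection_mul_pow_eq_one {a b : B} (hm : 2 ≤ M a b) :
    (geomReflection M a * geomReflection M b) ^ M a b = 1 := by
  refine LinearMap.ext fun v => ?_
  have hk : cosCoeff M a b ^ 2 ≠ 1 := by
    rw [cosCoeff, neg_sq]
    intro hcos
    exact sin_pi_div_ne_zero hm
      (pow_eq_zero_iff two_ne_zero |>.mp (by linarith [sin_sq_add_cos_sq (π / M a b)]))
  obtain ⟨x, y, ha, hb⟩ := exists_cosForm_sub_eq_zero M hk v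
  set w := v - single a x - single b y
  have hw : (geomReflection M a * geomReflection M b) w = w := by
    rw [Module.End.mul_apply, geomReflection_apply_of_cosForm_eq_zero M hb,
      geomReflection_apply_of_cosForm_eq_zero M ha]
  rw [show v = w + (single a x + single b y) by simp [w], map_add,
    geomReflection_mul_pow_apply_plane M hm, Module.End.pow_apply, Function.iterate_fixed hw,
    Module.End.one_apply]

lemma isLiftable_geomReflection : M.IsLiftable (geomReflection M) := by
  intro a b
  rcases eq_or_ne a b with rfl | hab
  · rw [M.diagonal, pow_one, geomReflection_mul_self]
  rcases eq_or_ne (M a b) 0 with h | h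
  · rw [h, pow_zero]
  · exact geomReflection_mul_pow_eq_one M (by have := M.off_diagonal a b hab; omega)

lemma geomReflection_mul_pow_single_of_eq_zero {a b : B} (h : M a b = 0) (j : ℕ) :
    ((geomReflection M a * geomReflection M b) ^ j) (single a 1) =
      single a (2 * j + 1 : ℝ) + single b (2 * j : ℝ) := by
  have := geomReflection_mul_pow_apply M (c := 1) (by rw [cosCoeff_of_eq_zero M h])
    (u := fun n => n) (fun n => by push_cast; ring) j
  simpa using this

end GeometricRepresentation

theorem coxeterMatrix_ne_zero_of_finite {B : Type*} {M : CoxeterMatrix B} {W : Type*}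
    [Group W] [Finite W] (cs : CoxeterSystem M W) (i j : B) : M i j ≠ 0 := by
  intro h
  have hij : i ≠ j := by
    rintro rfl
    simp at h
  set n := orderOf (cs.simple i * cs.simple j)
  have hρ : (geomReflection M i * geomReflection M j) ^ n = 1 := by
    have := congrArg (cs.lift ⟨_, isLiftable_geomReflection M⟩)
      (pow_orderOf_eq_one (cs.simple i * cs.simple j))
    rwa [map_pow, map_mul, map_one, cs.lift_apply_simple, cs.lift_apply_simple] at this
  have hn : n = 0 := by
    simpa [hρ, hij] using congrArg (fun v => v j) (geomReflection_mul_pow_single_of_eq_zero M h n)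
  exact (orderOf_pos _).ne' hn

section WGraphAlgebra

open LaurentPolynomial

section LaurentCoefficients

variable {R : Type*} [Semiring R]

lemma lcoeff_add (p q : R[T;T⁻¹]) (n : ℤ) : lcoeff (p + q) n = lcoeff p n + lcoeff q n := rfl

lemma lcoeff_one (n : ℤ) : lcoeff (1 : R[T;T⁻¹]) n = if n = 0 then 1 else 0 := by
  rw [lcoeff, ← map_one C, C_apply]

lemma lcoeff_C_mul_T_mul (r : R) (x : ℤ) (f : R[T;T⁻¹]) (y : ℤ) :
    lcoeff (C r * T x * f) y = r * lcoeff f (y - x) := by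
  rw [← single_eq_C_mul_T, sub_eq_neg_add]
  exact AddMonoidAlgebra.coeff_single_mul_apply f r x y

end LaurentCoefficients

lemma lcoeff_sub {R : Type*} [Ring R] (p q : R[T;T⁻¹]) (n : ℤ) :
    lcoeff (p - q) n = lcoeff p n - lcoeff q n := rfl

variable {B : Type*}

lemma lcoeff_iotaT_mul (b : B) (p : (FreeGen k B)[T;T⁻¹]) (n : ℤ) :
    lcoeff (iotaT k b * p) n = -eGen k b * lcoeff p (n + 1) + (1 - eGen k b) * lcoeff p (n - 1)
      + xGen k b * lcoeff p n := by
  rw [iotaT, ← mul_one (C (xGen k b)), ← T_zero, add_mul, add_mul, lcoeff_add, lcoeff_add,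
    lcoeff_C_mul_T_mul, lcoeff_C_mul_T_mul, lcoeff_C_mul_T_mul, sub_neg_eq_add, sub_zero]

variable (M : CoxeterMatrix B)

def altProdCoeff (b b' : B) (m : ℕ) (γ : ℤ) : Omega k M :=
  RingQuot.mkRingHom (OmegaRel k M) (lcoeff (altProd (iotaT k b) (iotaT k b') m) γ)

lemma altProdCoeff_zero (b b' : B) (γ : ℤ) :
    altProdCoeff k M b b' 0 γ = if γ = 0 then 1 else 0 := by
  rw [altProdCoeff, altProd, lcoeff_one, apply_ite (RingQuot.mkRingHom _), map_one, map_zero]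

lemma altProdCoeff_succ (b b' : B) (m : ℕ) (γ : ℤ) :
    altProdCoeff k M b b' (m + 1) γ =
      -eOm k M b * altProdCoeff k M b' b m (γ + 1) +
        (1 - eOm k M b) * altProdCoeff k M b' b m (γ - 1) +
        xOm k M b * altProdCoeff k M b' b m γ := by
  simp only [altProdCoeff, altProd, lcoeff_iotaT_mul, map_add, map_mul, map_neg, map_sub, map_one,
    eOm, xOm]

lemma altProdCoeff_eq_zero_of_lt {m : ℕ} {γ : ℤ} (h : (m : ℤ) < γ) (b b' : B) :
    altProdCoeff k M b b' m γ = 0 := by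
  induction m generalizing γ b b' with
  | zero => rw [altProdCoeff_zero, if_neg (by omega)]
  | succ m ih =>
    push_cast at h
    rw [altProdCoeff_succ, ih (by omega), ih (by omega), ih (by omega)]
    simp

lemma altProdCoeff_succ_self (b b' : B) (m : ℕ) :
    altProdCoeff k M b b' (m + 1) (m + 1) = (1 - eOm k M b) * altProdCoeff k M b' b m m := by
  rw [altProdCoeff_succ, altProdCoeff_eq_zero_of_lt k M (γ := m + 1 + 1) (by omega),
    altProdCoeff_eq_zero_of_lt k M (γ := m + 1) (by omega), add_sub_cancel_right]
  simp

lemma altProdCoeff_succ_self_sub_one (b b' : B) (m : ℕ) :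
    altProdCoeff k M b b' (m + 1) m =
      (1 - eOm k M b) * altProdCoeff k M b' b m (m - 1) +
        xOm k M b * altProdCoeff k M b' b m m := by
  rw [altProdCoeff_succ, altProdCoeff_eq_zero_of_lt k M (γ := m + 1) (by omega)]
  simp

lemma altProdCoeff_braid {b b' : B} (h : M b b' ≠ 0) (γ : ℤ) :
    altProdCoeff k M b b' (M b b') γ = altProdCoeff k M b' b (M b b') γ := by
  rw [← sub_eq_zero, altProdCoeff, altProdCoeff, ← map_sub, ← lcoeff_sub]
  exact RingQuot.mkRingHom_rel (OmegaRel.braid b b' h γ) |>.trans (map_zero _)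

lemma isIdempotentElem_eOm (b : B) : IsIdempotentElem (eOm k M b) := by
  rw [IsIdempotentElem, eOm, ← map_mul]
  exact RingQuot.mkRingHom_rel (OmegaRel.e_idem b)

lemma xOm_mul_eOm (b : B) : xOm k M b * eOm k M b = 0 := by
  rw [eOm, xOm, ← map_mul, RingQuot.mkRingHom_rel (OmegaRel.xe b), map_zero]

lemma altProdCoeff_two_one (a b : B) :
    altProdCoeff k M a b 2 1 = (1 - eOm k M a) * xOm k M b + xOm k M a * (1 - eOm k M b) := by
  rw [show 2 = 0 + 1 + 1 from rfl]
  simp only [altProdCoeff_succ, altProdCoeff_zero]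
  norm_num

lemma one_sub_eOm_mul_xOm_mul_eOm {a b : B} (h : M a b = 2) :
    (1 - eOm k M b) * xOm k M a * eOm k M b = 0 := by
  have hrel := altProdCoeff_braid k M (b := a) (b' := b) (by omega) 1
  rw [h, altProdCoeff_two_one, altProdCoeff_two_one] at hrel
  have := congrArg (· * eOm k M b) hrel
  have hx : xOm k M b * ((1 - eOm k M a) * eOm k M b) = 0 := by
    rw [((Commute.one_left _).sub_left (commute_eOm k M a b)).eq, ← mul_assoc, xOm_mul_eOm,
      zero_mul]
  simp only [add_mul, mul_assoc, xOm_mul_eOm, (isIdempotentElem_eOm k M b).one_sub_mul_self, hx,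
    mul_zero, add_zero] at this
  rw [mul_assoc, ← this]

variable [Fintype B] [DecidableEq B]

lemma commute_eOm_EOm (b : B) (I : Finset B) : Commute (eOm k M b) (EOm k M I) :=
  (Finset.noncommProd_commute _ _ _ _ fun _ _ => commute_eOm k M _ _).mul_right
    (Finset.noncommProd_commute _ _ _ _ fun _ _ =>
      (Commute.one_right _).sub_right (commute_eOm k M _ _))

lemma eOm_mul_EOm_of_mem {b : B} {I : Finset B} (hb : b ∈ I) :
    eOm k M b * EOm k M I = EOm k M I := by
  rw [EOm, ← mul_assoc]
  exact congrArg (· * _)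
    (Finset.mul_noncommProd_of_isIdempotentElem _ hb (isIdempotentElem_eOm k M b))

lemma eOm_mul_EOm_of_notMem {b : B} {I : Finset B} (hb : b ∉ I) :
    eOm k M b * EOm k M I = 0 := by
  rw [EOm]
  refine ((Finset.noncommProd_commute _ _ _ _ fun _ _ => commute_eOm k M b _).left_comm _).trans ?_
  exact (congrArg (_ * ·) (Finset.mul_noncommProd_eq_zero_of_mem _ (Finset.mem_compl.2 hb)
    (isIdempotentElem_eOm k M b).mul_one_sub_self)).trans (mul_zero _)

lemma EOm_mul_one_sub_eOm_of_mem {b : B} {I : Finset B} (hb : b ∈ I) :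
    EOm k M I * (1 - eOm k M b) = 0 := by
  rw [mul_sub, mul_one, ← (commute_eOm_EOm k M b I).eq, eOm_mul_EOm_of_mem k M hb, sub_self]

lemma one_sub_eOm_mul_EOm_of_notMem {b : B} {I : Finset B} (hb : b ∉ I) :
    (1 - eOm k M b) * EOm k M I = EOm k M I := by
  rw [sub_mul, one_mul, eOm_mul_EOm_of_notMem k M hb, sub_zero]

lemma EOm_mul_one_sub_eOm_of_notMem {b : B} {I : Finset B} (hb : b ∉ I) :
    EOm k M I * (1 - eOm k M b) = EOm k M I := by
  rw [← ((Commute.one_left _).sub_left (commute_eOm_EOm k M b I)).eq,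
    one_sub_eOm_mul_EOm_of_notMem k M hb]

lemma altProdCoeff_self_mul_EOm {J : Finset B} (m : ℕ) {b b' : B} (hb : b ∉ J)
    (hb' : b' ∉ J) :
    altProdCoeff k M b b' m m * EOm k M J = EOm k M J := by
  induction m generalizing b b' with
  | zero => rw [Nat.cast_zero, altProdCoeff_zero, if_pos rfl, one_mul]
  | succ m ih =>
    rw [Nat.cast_succ, altProdCoeff_succ_self, mul_assoc, ih hb' hb,
      one_sub_eOm_mul_EOm_of_notMem k M hb]

lemma EOm_mul_altProdCoeff_mul_EOm {I J : Finset B} {b b' : B} (hb : b ∈ I \ J)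
    (hb' : b' ∈ I \ J) (m : ℕ) :
    EOm k M I * altProdCoeff k M b b' (m + 1) m * EOm k M J = XOm k M I J b := by
  rw [Finset.mem_sdiff] at hb hb'
  rw [altProdCoeff_succ_self_sub_one, mul_add, add_mul, ← mul_assoc,
    EOm_mul_one_sub_eOm_of_mem k M hb.1, zero_mul, zero_mul, zero_add, mul_assoc, mul_assoc,
    altProdCoeff_self_mul_EOm k M m hb'.2 hb.2, ← mul_assoc, XOm]

lemma XOm_eq_XOm_of_ne_zero {I J : Finset B} {s u : B} (hs : s ∈ I \ J) (hu : u ∈ I \ J)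
    (h : M s u ≠ 0) : XOm k M I J s = XOm k M I J u := by
  obtain ⟨m, hm⟩ : ∃ m, M s u = m + 1 := ⟨M s u - 1, by omega⟩
  rw [← EOm_mul_altProdCoeff_mul_EOm k M hs hu m, ← EOm_mul_altProdCoeff_mul_EOm k M hu hs m,
    ← hm, altProdCoeff_braid k M h]

lemma XOm_eq_zero_of_eq_two {I J : Finset B} {s t : B} (ht : t ∈ J \ I) (h : M s t = 2) :
    XOm k M I J s = 0 := by
  rw [Finset.mem_sdiff] at ht
  calc XOm k M I J s
      = EOm k M I * (1 - eOm k M t) * xOm k M s * (eOm k M t * EOm k M J) := by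
        rw [XOm, eOm_mul_EOm_of_mem k M ht.1, EOm_mul_one_sub_eOm_of_notMem k M ht.2]
    _ = EOm k M I * ((1 - eOm k M t) * xOm k M s * eOm k M t) * EOm k M J := by
        simp only [mul_assoc]
    _ = 0 := by rw [one_sub_eOm_mul_xOm_mul_eOm k M h, mul_zero, zero_mul]

end WGraphAlgebra

/-- let `(W,S)` be a finite Coxeter system, `I, J ⊆ S` and `s ∈ I ∖ J`.
If some `t ∈ J ∖ I` has `ord(st) = 2` then `X_{IJ}^s = 0` in `Ω(W,S)`; consequently
`X_{IJ}^s ≠ 0` implies that `I ← J` is an edge of the compatibility graph `Q_W`. -/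
theorem statement2 {B : Type*} [Fintype B] [DecidableEq B] (M : CoxeterMatrix B)
    {W : Type*} [Group W] [Finite W] (cs : CoxeterSystem M W)
    (I J : Finset B) (s : B) (hs : s ∈ I \ J) :
    ((∃ t ∈ J \ I, M s t = 2) → XOm ℤ M I J s = 0) ∧
    (XOm ℤ M I J s ≠ 0 → QEdge M I J) := by
  have vanish : ∀ u ∈ I \ J, ∀ t ∈ J \ I, M u t = 2 → XOm ℤ M I J s = 0 := by
    intro u hu t ht h
    rw [XOm_eq_XOm_of_ne_zero ℤ M hs hu (coxeterMatrix_ne_zero_of_finite cs s u)]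
    exact XOm_eq_zero_of_eq_two ℤ M ht h
  refine ⟨fun ⟨t, ht, h⟩ => XOm_eq_zero_of_eq_two ℤ M ht h, fun hX => ⟨⟨s, hs⟩, ?_⟩⟩
  exact fun u hu t ht h => hX (vanish u hu t ht h)

end WGraphPaper

end
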